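/- arXiv:2602.01191 — 4 statements merged into one kernel-verified Lean document; each statement's English description precedes it below -/
import Mathlib

section
/- For integers ℓ > 2r ≥ 0, the truncated binomial polynomial b_{ℓ,2r}(t) = Σ_{i=0}^{2r} C(ℓ,i) t^i is strictly positive for all real t. -/
/-!
`b_{ℓ,2r}` has even degree and positive leading coefficient, so it tends to `+∞` in both
directions and attains its minimum at a critical point `x`. Differentiating termwise gives
`b_{ℓ,m}' = ℓ b_{ℓ-1,m-1}`, and Pascal's rule gives `b_{ℓ,m} = (1 + t) b_{ℓ-1,m-1} + C(ℓ-1,m) t^m`.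
Hence `b_{ℓ-1,2r-1}(x) = 0`, which forces `x ≠ 0` as `b_{ℓ-1,2r-1}(0) = 1`, and the minimum value
is `C(ℓ-1,2r) x^{2r} > 0`.
-/

open Finset Polynomial Filter

noncomputable def truncBinomial (R : Type*) [Semiring R] (ℓ m : ℕ) : R[X] :=
  ∑ i ∈ range (m + 1), C (ℓ.choose i : R) * X ^ i

section Semiring

variable {R : Type*} [Semiring R]

theorem eval_truncBinomial (ℓ m : ℕ) (t : R) :
    (truncBinomial R ℓ m).eval t = ∑ i ∈ range (m + 1), (ℓ.choose i : R) * t ^ i := by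
  simp [truncBinomial, eval_finsetSum]

theorem truncBinomial_succ (ℓ m : ℕ) :
    truncBinomial R ℓ (m + 1) = truncBinomial R ℓ m + C (ℓ.choose (m + 1) : R) * X ^ (m + 1) :=
  sum_range_succ _ _

theorem truncBinomial_eval_zero (ℓ m : ℕ) : (truncBinomial R ℓ m).eval 0 = 1 := by
  simp [eval_truncBinomial, sum_range_succ']

theorem coeff_truncBinomial (ℓ m k : ℕ) :
    (truncBinomial R ℓ m).coeff k = if k ≤ m then (ℓ.choose k : R) else 0 := by
  simp [truncBinomial, finsetSum_coeff]

theorem derivative_truncBinomial (ℓ m : ℕ) :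
    derivative (truncBinomial R (ℓ + 1) (m + 1)) = C ((ℓ + 1 : ℕ) : R) * truncBinomial R ℓ m := by
  induction m with
  | zero => simp [truncBinomial, sum_range_succ]
  | succ m ih =>
    rw [truncBinomial_succ, derivative_add, ih, truncBinomial_succ, mul_add,
      derivative_C_mul_X_pow]
    congr 1
    rw [← mul_assoc, ← C_mul, ← Nat.cast_mul, ← Nat.cast_mul, Nat.add_one_mul_choose_eq]
    rfl

variable [CharZero R] {ℓ m : ℕ}

theorem natDegree_truncBinomial (h : m ≤ ℓ) : (truncBinomial R ℓ m).natDegree = m := by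
  refine natDegree_eq_of_le_of_coeff_ne_zero ?_ ?_
  · exact natDegree_le_iff_coeff_eq_zero.mpr fun k hk => by
      simp [coeff_truncBinomial, not_le.mpr hk]
  · simpa [coeff_truncBinomial] using Nat.choose_ne_zero h

theorem leadingCoeff_truncBinomial (h : m ≤ ℓ) :
    (truncBinomial R ℓ m).leadingCoeff = ℓ.choose m := by
  simp [leadingCoeff, natDegree_truncBinomial h, coeff_truncBinomial]

end Semiring

theorem truncBinomial_succ_succ {R : Type*} [CommSemiring R] (ℓ m : ℕ) :
    truncBinomial R (ℓ + 1) (m + 1) =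
      (1 + X) * truncBinomial R ℓ m + C (ℓ.choose (m + 1) : R) * X ^ (m + 1) := by
  induction m with
  | zero => simp [truncBinomial, sum_range_succ]; ring
  | succ m ih =>
    rw [truncBinomial_succ, ih, truncBinomial_succ, Nat.choose_succ_succ, Nat.cast_add, C_add]
    ring

theorem Polynomial.tendsto_eval_cocompact_of_even_natDegree {P : ℝ[X]} (hdeg : 0 < P.natDegree)
    (heven : Even P.natDegree) (hlc : 0 ≤ P.leadingCoeff) :
    Tendsto (fun x => P.eval x) (cocompact ℝ) atTop := by
  rw [cocompact_eq_atBot_atTop, tendsto_sup]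
  refine ⟨?_, P.tendsto_atTop_of_leadingCoeff_nonneg (natDegree_pos_iff_degree_pos.mp hdeg) hlc⟩
  have hX : (-X : ℝ[X]).natDegree = 1 := by simp
  have hcomp := (P.comp (-X)).tendsto_atTop_of_leadingCoeff_nonneg
    (natDegree_pos_iff_degree_pos.mp (by rwa [natDegree_comp, hX, mul_one]))
    (by rwa [leadingCoeff_comp (by simp [hX]), leadingCoeff_neg, leadingCoeff_X,
      heven.neg_one_pow, mul_one])
  simpa [Function.comp_def] using hcomp.comp tendsto_neg_atBot_atTop

theorem pos_of_tendsto_cocompact_of_deriv_eq_zero {f : ℝ → ℝ} (hf : Continuous f)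
    (hlim : Tendsto f (cocompact ℝ) atTop) (hcrit : ∀ x, deriv f x = 0 → 0 < f x) (x : ℝ) :
    0 < f x := by
  obtain ⟨x₀, hmin⟩ := hf.exists_forall_le hlim
  have hloc : IsLocalMin f x₀ := (isMinOn_univ_iff.mpr hmin).isLocalMin univ_mem
  exact (hcrit x₀ hloc.deriv_eq_zero).trans_le (hmin x)

theorem eval_truncBinomial_pos {ℓ r : ℕ} (h : 2 * r < ℓ) (t : ℝ) :
    0 < (truncBinomial ℝ ℓ (2 * r)).eval t := by
  obtain _ | r := r
  · simp [truncBinomial]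
  obtain ⟨L, rfl⟩ : ∃ L, ℓ = L + 1 := ⟨ℓ - 1, by omega⟩
  rw [show 2 * (r + 1) = 2 * r + 1 + 1 by ring] at h ⊢
  refine pos_of_tendsto_cocompact_of_deriv_eq_zero (Polynomial.continuous _) ?_ ?_ t
  · refine tendsto_eval_cocompact_of_even_natDegree ?_ ?_ ?_ <;>
      simp only [natDegree_truncBinomial h.le, leadingCoeff_truncBinomial h.le]
    · omega
    · exact ⟨r + 1, by ring⟩
    · positivity
  · intro x hx
    rw [Polynomial.deriv, derivative_truncBinomial, eval_mul, eval_C, mul_eq_zero] at hx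
    have hroot : (truncBinomial ℝ L (2 * r + 1)).eval x = 0 := hx.resolve_left (by positivity)
    have hx0 : x ≠ 0 := by
      rintro rfl
      simp [truncBinomial_eval_zero] at hroot
    have hchoose : (0 : ℝ) < L.choose (2 * r + 1 + 1) := by
      exact_mod_cast Nat.choose_pos (by omega)
    rw [truncBinomial_succ_succ, eval_add, eval_mul, hroot, mul_zero, zero_add, eval_mul, eval_C,
      eval_pow, eval_X]
    exact mul_pos hchoose (Even.pow_pos ⟨r + 1, by ring⟩ hx0)

theorem truncated_binomial_pos (ℓ r : ℕ) (h : 2 * r < ℓ) (t : ℝ) :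
    0 < ∑ i ∈ Finset.range (2 * r + 1), (ℓ.choose i : ℝ) * t ^ i :=
  eval_truncBinomial ℓ (2 * r) t ▸ eval_truncBinomial_pos h t
end

section
/- Let f ∈ ℝ[t] satisfy f'(0) = 0, f(0) = 0, and f(t) ≥ 0 for all real t. If f³ = g₁² + g₂² with g₁, g₂ ∈ ℝ[t], then t² divides g₁ and g₂, and consequently f³ is a sum of two squares of elements of the subring ℝ[t²,t³]. -/
/-!
Since `f(0) = f'(0) = 0`, `t² ∣ f`, hence `t⁴ ∣ f³ = g₁² + g₂²`. Over an ordered ring a sum of two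
squares vanishes at `0` only if both summands do, so `t ∣ gᵢ`; dividing out `t²` and repeating
gives `t² ∣ gᵢ`. Every polynomial divisible by `t²` lies in `ℝ[t², t³]`.
-/

open Polynomial

section Semiring

variable {R : Type*} [CommSemiring R]

theorem X_sq_dvd_iff {f : R[X]} : X ^ 2 ∣ f ↔ f.eval 0 = 0 ∧ (derivative f).eval 0 = 0 := by
  rw [X_pow_dvd_iff, ← coeff_zero_eq_eval_zero, ← coeff_zero_eq_eval_zero, coeff_derivative]
  constructor
  · intro h
    simp [h 0 (by norm_num), h 1 (by norm_num)]
  · rintro ⟨h0, h1⟩ d hd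
    interval_cases d
    · exact h0
    · simpa using h1

theorem X_pow_add_two_mem_adjoin_X_sq_X_cube (n : ℕ) :
    (X : R[X]) ^ (n + 2) ∈ Algebra.adjoin R ({X ^ 2, X ^ 3} : Set R[X]) := by
  induction n using Nat.twoStepInduction with
  | zero => exact Algebra.subset_adjoin (by simp)
  | one => exact Algebra.subset_adjoin (by simp)
  | more n ih _ =>
    rw [show n + 2 + 2 = 2 + (n + 2) by ring, pow_add]
    exact mul_mem (Algebra.subset_adjoin (by simp)) ih

theorem mem_adjoin_X_sq_X_cube_of_X_sq_dvd {g : R[X]} (h : X ^ 2 ∣ g) :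
    g ∈ Algebra.adjoin R ({X ^ 2, X ^ 3} : Set R[X]) := by
  obtain ⟨c, rfl⟩ := h
  induction c using Polynomial.induction_on' with
  | add p q hp hq => rw [mul_add]; exact add_mem hp hq
  | monomial n a =>
    rw [← C_mul_X_pow_eq_monomial, mul_left_comm, ← pow_add, add_comm, ← smul_eq_C_mul]
    exact Subalgebra.smul_mem _ (X_pow_add_two_mem_adjoin_X_sq_X_cube n) a

end Semiring

section OrderedRing

variable {R : Type*} [CommRing R] [LinearOrder R] [IsStrictOrderedRing R]

theorem X_dvd_of_X_dvd_sq_add_sq {a b : R[X]} (h : X ∣ a ^ 2 + b ^ 2) : X ∣ a ∧ X ∣ b := by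
  simp only [X_dvd_iff, coeff_zero_eq_eval_zero, eval_add, sq, eval_mul] at h ⊢
  exact mul_self_add_mul_self_eq_zero.1 h

theorem X_pow_dvd_of_X_pow_two_mul_dvd_sq_add_sq {a b : R[X]} (n : ℕ)
    (h : X ^ (2 * n) ∣ a ^ 2 + b ^ 2) : X ^ n ∣ a ∧ X ^ n ∣ b := by
  induction n generalizing a b with
  | zero => simp
  | succ n ih =>
    obtain ⟨⟨a', rfl⟩, ⟨b', rfl⟩⟩ :=
      X_dvd_of_X_dvd_sq_add_sq ((dvd_pow_self X (by omega)).trans h)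
    have h' : X ^ 2 * X ^ (2 * n) ∣ X ^ 2 * (a' ^ 2 + b' ^ 2) := by
      rw [← pow_add]
      convert h using 2 <;> ring
    obtain ⟨ha, hb⟩ := ih ((mul_dvd_mul_iff_left (pow_ne_zero 2 X_ne_zero)).1 h')
    rw [pow_succ']
    exact ⟨mul_dvd_mul_left X ha, mul_dvd_mul_left X hb⟩

end OrderedRing

theorem cusp_cube_sos_general (f g₁ g₂ : Polynomial ℝ)
    (hd : (Polynomial.derivative f).eval 0 = 0) (h0 : f.eval 0 = 0)
    (hsq : f ^ 3 = g₁ ^ 2 + g₂ ^ 2) :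
    (X ^ 2 ∣ g₁ ∧ X ^ 2 ∣ g₂) ∧
      ∃ h₁ h₂ : Polynomial ℝ,
        h₁ ∈ Algebra.adjoin ℝ ({X ^ 2, X ^ 3} : Set (Polynomial ℝ)) ∧
        h₂ ∈ Algebra.adjoin ℝ ({X ^ 2, X ^ 3} : Set (Polynomial ℝ)) ∧
        f ^ 3 = h₁ ^ 2 + h₂ ^ 2 := by
  have hf : X ^ 2 ∣ f := X_sq_dvd_iff.2 ⟨h0, hd⟩
  have hf3 : X ^ (2 * 2) ∣ g₁ ^ 2 + g₂ ^ 2 := by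
    rw [← hsq, pow_mul]
    exact (pow_dvd_pow_of_dvd hf 2).trans (pow_dvd_pow f (by norm_num))
  have hg := X_pow_dvd_of_X_pow_two_mul_dvd_sq_add_sq 2 hf3
  exact ⟨hg, g₁, g₂, mem_adjoin_X_sq_X_cube_of_X_sq_dvd hg.1,
    mem_adjoin_X_sq_X_cube_of_X_sq_dvd hg.2, hsq⟩

theorem cusp_cube_sos (f g₁ g₂ : Polynomial ℝ)
    (hd : (Polynomial.derivative f).eval 0 = 0) (h0 : f.eval 0 = 0)
    (hnn : ∀ t : ℝ, 0 ≤ f.eval t) (hsq : f ^ 3 = g₁ ^ 2 + g₂ ^ 2) :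
    (X ^ 2 ∣ g₁ ∧ X ^ 2 ∣ g₂) ∧
      ∃ h₁ h₂ : Polynomial ℝ,
        h₁ ∈ Algebra.adjoin ℝ ({X ^ 2, X ^ 3} : Set (Polynomial ℝ)) ∧
        h₂ ∈ Algebra.adjoin ℝ ({X ^ 2, X ^ 3} : Set (Polynomial ℝ)) ∧
        f ^ 3 = h₁ ^ 2 + h₂ ^ 2 :=
  cusp_cube_sos_general f g₁ g₂ hd h0 hsq
end

section
/- The polynomial t²+1 is not a sum of squares in the ring ℝ[X₀] = {g ∈ ℝ[t] : g(i) ∈ ℝ}. -/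
/-!
Evaluating `X ^ 2 + 1 = ∑ gⱼ ^ 2` at `i` gives `0 = ∑ gⱼ(i) ^ 2` with every `gⱼ(i)` real, so every
`gⱼ(i)` vanishes and `X ^ 2 + 1 ∣ gⱼ`. Then `(X ^ 2 + 1) ^ 2` divides `X ^ 2 + 1`, forcing
`X ^ 2 + 1` to be a unit, which its degree forbids.
-/

open Polynomial

theorem Complex.eq_zero_of_sum_sq_eq_zero {ι : Type*} {s : Finset ι} {z : ι → ℂ}
    (him : ∀ j ∈ s, (z j).im = 0) (h : ∑ j ∈ s, z j ^ 2 = 0) : ∀ j ∈ s, z j = 0 := by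
  have hre : ∑ j ∈ s, (z j).re * (z j).re = 0 :=
    calc ∑ j ∈ s, (z j).re * (z j).re = (∑ j ∈ s, z j ^ 2).re := by
          rw [Complex.re_sum]
          exact Finset.sum_congr rfl fun j hj => by simp [sq, him j hj]
      _ = 0 := by rw [h, Complex.zero_re]
  intro j hj
  exact Complex.ext ((Finset.sum_mul_self_eq_zero_iff s _).1 hre j hj) (him j hj)

theorem Polynomial.X_sq_add_one_dvd_of_aeval_I_eq_zero {p : ℝ[X]} (h : aeval Complex.I p = 0) :
    X ^ 2 + 1 ∣ p := by
  simpa using p.quadratic_dvd_of_aeval_eq_zero_im_ne_zero h (by simp)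

theorem isUnit_of_eq_sum_sq_of_dvd {R ι : Type*} [CommRing R] [IsDomain R] {s : Finset ι}
    {q : R} {g : ι → R} (hq : q ≠ 0) (hdvd : ∀ j ∈ s, q ∣ g j) (h : q = ∑ j ∈ s, g j ^ 2) :
    IsUnit q := by
  have hsq : q * q ∣ q * 1 := by
    rw [mul_one, ← sq]
    conv_rhs => rw [h]
    exact Finset.dvd_sum fun j hj => pow_dvd_pow_of_dvd (hdvd j hj) 2
  exact isUnit_of_dvd_one ((mul_dvd_mul_iff_left hq).1 hsq)

theorem X_sq_add_one_not_sos_in_nodal_ring :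
    ¬ ∃ (n : ℕ) (g : Fin n → Polynomial ℝ),
        (∀ j, (Polynomial.aeval Complex.I (g j)).im = 0) ∧
        (X ^ 2 + 1 : Polynomial ℝ) = ∑ j, (g j) ^ 2 := by
  rintro ⟨n, g, him, hsum⟩
  have hI : ∑ j, aeval Complex.I (g j) ^ 2 = 0 := by
    simpa [Complex.I_sq] using (congrArg (aeval Complex.I) hsum).symm
  have hroot := Complex.eq_zero_of_sum_sq_eq_zero (fun j _ => him j) hI
  have hdeg : (X ^ 2 + 1 : ℝ[X]).natDegree = 2 := by compute_degree!
  have hunit : IsUnit (X ^ 2 + 1 : ℝ[X]) :=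
    isUnit_of_eq_sum_sq_of_dvd (ne_zero_of_natDegree_gt (n := 0) (by omega))
      (fun j hj => X_sq_add_one_dvd_of_aeval_I_eq_zero (hroot j hj)) hsum
  exact not_isUnit_of_natDegree_pos _ (by omega) hunit
end

section
/- Let q(t) = a₀ + a₁(1+t²+t⁴) with a₁ ≠ 0 plus a₂·t⁹(1+t²) with a₂ ∈ ℝ, i.e., q(t) = (a₀+a₁) + a₁t² + a₁t⁴ + a₂t⁹ + a₂t¹¹, the pullback of an affine linear form along the parametrization t ↦ (1+t²+t⁴, t⁹(1+t²)). If q ≠ 0, then q has strictly fewer than 11 real roots counted with multiplicity. -/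
/-!
By Rolle's theorem a real polynomial has at most one more real root (with multiplicity) than its
derivative. The fifth derivative of `q` is `a₂ t⁴ (15120 + 55440 t²)`, whose only real root is `0`,
of multiplicity `4` (or which vanishes identically, with no roots in Mathlib's convention), so `q`
has at most `4 + 5 = 9` real roots.
-/

open Polynomial

theorem card_roots_le_card_roots_iterate_derivative_add (p : ℝ[X]) (n : ℕ) :
    p.roots.card ≤ (derivative^[n] p).roots.card + n := by
  induction n with
  | zero => simp
  | succ n ih =>
    rw [Function.iterate_succ_apply']
    linarith [card_roots_le_derivative (derivative^[n] p)]

theorem card_roots_X_pow_mul_le {R : Type*} [CommRing R] [IsDomain R] {r : R[X]}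
    (hr : r.roots = 0) (k : ℕ) : (X ^ k * r).roots.card ≤ k := by
  rcases eq_or_ne r 0 with rfl | hr0
  · simp
  · rw [roots_mul (mul_ne_zero (pow_ne_zero k X_ne_zero) hr0), hr, roots_X_pow]
    simp

theorem roots_eq_zero_of_forall_eval_pos {p : ℝ[X]} (hp : ∀ x, 0 < p.eval x) : p.roots = 0 :=
  Multiset.eq_zero_of_forall_notMem fun x hx => (hp x).ne' (isRoot_of_mem_roots hx)

theorem iterate_derivative_five_line_pullback (c₀ a₁ a₂ : ℝ) :
    derivative^[5] (C c₀ + C a₁ * X ^ 2 + C a₁ * X ^ 4 + C a₂ * X ^ 9 + C a₂ * X ^ 11) =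
      X ^ 4 * (C a₂ * (C 15120 + C 55440 * X ^ 2)) := by
  simp only [iterate_map_add, iterate_derivative_C_mul, iterate_derivative_X_pow_eq_C_mul,
    iterate_derivative_C (by norm_num : 0 < 5)]
  norm_num [map_ofNat]
  ring

theorem roots_C_mul_C_add_C_mul_X_sq {a b c : ℝ} (hb : 0 < b) (hc : 0 < c) :
    (C a * (C b + C c * X ^ 2)).roots = 0 := by
  rcases eq_or_ne a 0 with rfl | ha
  · simp
  · rw [roots_C_mul _ ha]
    exact roots_eq_zero_of_forall_eval_pos fun x => by
      simp only [eval_add, eval_mul, eval_pow, eval_X, eval_C]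
      positivity

theorem line_pullback_few_real_roots_general (a₀ a₁ a₂ : ℝ)
    (q : Polynomial ℝ)
    (hq : q = C (a₀ + a₁) + C a₁ * X ^ 2 + C a₁ * X ^ 4 + C a₂ * X ^ 9 + C a₂ * X ^ 11) :
    (q.roots).card < 11 := by
  calc q.roots.card ≤ (derivative^[5] q).roots.card + 5 :=
        card_roots_le_card_roots_iterate_derivative_add q 5
    _ ≤ 4 + 5 := by
        rw [hq, iterate_derivative_five_line_pullback]
        gcongr
        exact card_roots_X_pow_mul_le (roots_C_mul_C_add_C_mul_X_sq (by norm_num) (by norm_num)) 4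
    _ < 11 := by norm_num

theorem line_pullback_few_real_roots (a₀ a₁ a₂ : ℝ) (ha₁ : a₁ ≠ 0)
    (q : Polynomial ℝ)
    (hq : q = C (a₀ + a₁) + C a₁ * X ^ 2 + C a₁ * X ^ 4 + C a₂ * X ^ 9 + C a₂ * X ^ 11)
    (hq0 : q ≠ 0) :
    (q.roots).card < 11 :=
  line_pullback_few_real_roots_general a₀ a₁ a₂ q hq
end
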